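/- Let p, ℓ be integers with 0 ≤ ℓ < p, and define Q₁(τ) = ((1−τ)/2)^p · P_ℓ^{(p,−p)}(τ) and Q₃(τ) = ((1+τ)/2)^p · P_ℓ^{(−p,p)}(τ). Then Q₁ and Q₃ are polynomial functions, each solves the Jacobi-type ODE with parameters (p, ℓ) on (−1,1), they are linearly independent, and every solution a : (−1,1) → ℝ of this ODE can be written as a(τ) = c·Q₁(τ) + d·Q₃(τ) for unique real constants c and d. -/

import Mathlib

/-- The generalized binomial coefficient `C(y, k) = (∏_{i=0}^{k−1}(y−i)) / k!`
for real `y` and natural `k`. -/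
noncomputable def genBinom (y : ℝ) (k : ℕ) : ℝ :=
  (∏ i ∈ Finset.range k, (y - (i : ℝ))) / (Nat.factorial k : ℝ)

/-- The Jacobi polynomial
`P_n^{(α,β)}(x) = Σ_{l=0}^{n} C(n+α, l) C(n+β, n−l) ((x−1)/2)^{n−l} ((x+1)/2)^l`. -/
noncomputable def jacobiP (n : ℕ) (α β : ℝ) (x : ℝ) : ℝ :=
  ∑ l ∈ Finset.range (n + 1),
    genBinom ((n : ℝ) + α) l * genBinom ((n : ℝ) + β) (n - l) *
      ((x - 1) / 2) ^ (n - l) * ((x + 1) / 2) ^ l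

/-- `a` solves the Jacobi-type ODE
`(1−τ²)a'' + 2(p−1)τ a' + (ℓ(ℓ+1) − p(p−1)) a = 0` on `(−1,1)`. -/
def JacobiODESol (p ℓ : ℕ) (a : ℝ → ℝ) : Prop :=
  ∀ τ ∈ Set.Ioo (-1 : ℝ) 1,
    (1 - τ ^ 2) * deriv (deriv a) τ + 2 * ((p : ℝ) - 1) * τ * deriv a τ
      + ((ℓ : ℝ) * ((ℓ : ℝ) + 1) - (p : ℝ) * ((p : ℝ) - 1)) * a τ = 0

/-!
In the variables `u = (τ - 1)/2`, `v = (τ + 1)/2` (so `1 - τ² = -4uv`, `τ = u + v`) the operator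
`L` of the ODE sends `u^a v^b` with `a + b = p + ℓ` to
`a(p - a)(u^(a-1) v^(b+1) - u^a v^b) - b(p - b)(u^a v^b - u^(a+1) v^(b-1))`.
Up to the sign `(-1)^p`, `Q₁ = Σ_l c_l u^(p+ℓ-l) v^l` with `c_l = C(ℓ+p, l) C(ℓ-p, ℓ-l)`, and the
binomial recursion gives `c_l (p+ℓ-l)(l-ℓ) = c_(l+1) (l+1)(p-l-1)`, so `L Q₁` telescopes to `0`.
The ODE is invariant under `τ ↦ -τ`, which maps `Q₁` to `(-1)^ℓ Q₃`.
Since `p ≥ 1`, `Q₁` vanishes at `1` and `Q₃` at `-1`, while `Q₃(1) = C(ℓ-p, ℓ) ≠ 0` because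
`ℓ < p`; this gives independence.
On `(-1, 1)` the ODE is a regular linear equation `y'' = f y' + g y`, whose solutions are
determined by their value and derivative at one point (Picard–Lindelöf uniqueness), so the
solution space is at most two-dimensional and is spanned by `Q₁` and `Q₃`.
-/

open Polynomial Set

theorem eqOn_of_hasDerivAt_clm_apply {E : Type*} [NormedAddCommGroup E] [NormedSpace ℝ E]
    {A : ℝ → E →L[ℝ] E} {x z : ℝ → E} {a b t₀ : ℝ} (hA : ContinuousOn A (Ioo a b))
    (ht₀ : t₀ ∈ Ioo a b) (hx : ∀ t ∈ Ioo a b, HasDerivAt x (A t (x t)) t)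
    (hz : ∀ t ∈ Ioo a b, HasDerivAt z (A t (z t)) t) (h₀ : x t₀ = z t₀) :
    EqOn x z (Ioo a b) := by
  intro t ht
  obtain ⟨a', ha, ha'⟩ := exists_between (lt_min ht.1 ht₀.1)
  obtain ⟨b', hb', hb⟩ := exists_between (max_lt ht.2 ht₀.2)
  have hsub : Icc a' b' ⊆ Ioo a b := Icc_subset_Ioo ha hb
  -- a bound for `‖A‖` on the compact interval `[a', b']` is a uniform Lipschitz constant there
  obtain ⟨K, hK⟩ := isCompact_Icc.exists_bound_of_continuousOn (hA.mono hsub)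
  have hmem : ∀ s ∈ Icc (min t t₀) (max t t₀), s ∈ Ioo a' b' := fun s hs =>
    ⟨ha'.trans_le hs.1, hs.2.trans_lt hb'⟩
  refine ODE_solution_unique_of_mem_Ioo (K := K.toNNReal) (s := fun _ => univ)
    (fun s hs => ((A s).lipschitz.weaken ?_).lipschitzOnWith)
    (hmem t₀ ⟨min_le_right _ _, le_max_right _ _⟩)
    (fun s hs => ⟨hx s (hsub (Ioo_subset_Icc_self hs)), trivial⟩)
    (fun s hs => ⟨hz s (hsub (Ioo_subset_Icc_self hs)), trivial⟩) h₀
    (hmem t ⟨min_le_left _ _, le_max_left _ _⟩)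
  rw [← Real.toNNReal_coe (r := ‖A s‖₊), coe_nnnorm]
  exact Real.toNNReal_le_toNNReal (hK s (Ioo_subset_Icc_self hs))

def SolvesSecondOrderLinearODE (f g : ℝ → ℝ) (s : Set ℝ) (y y' : ℝ → ℝ) : Prop :=
  ∀ t ∈ s, HasDerivAt y (y' t) t ∧ HasDerivAt y' (f t * y' t + g t * y t) t

namespace SolvesSecondOrderLinearODE

variable {f g y₁ y₁' y₂ y₂' : ℝ → ℝ} {a b : ℝ}

theorem mul_add_mul {s : Set ℝ} (h₁ : SolvesSecondOrderLinearODE f g s y₁ y₁')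
    (h₂ : SolvesSecondOrderLinearODE f g s y₂ y₂') (c d : ℝ) :
    SolvesSecondOrderLinearODE f g s (fun t => c * y₁ t + d * y₂ t)
      (fun t => c * y₁' t + d * y₂' t) := fun t ht =>
  ⟨((h₁ t ht).1.const_mul c).add ((h₂ t ht).1.const_mul d),
    (((h₁ t ht).2.const_mul c).add ((h₂ t ht).2.const_mul d)).congr_deriv (by ring)⟩

theorem eqOn (hf : ContinuousOn f (Ioo a b)) (hg : ContinuousOn g (Ioo a b))
    (h₁ : SolvesSecondOrderLinearODE f g (Ioo a b) y₁ y₁')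
    (h₂ : SolvesSecondOrderLinearODE f g (Ioo a b) y₂ y₂') {t₀ : ℝ} (ht₀ : t₀ ∈ Ioo a b)
    (h₀ : y₁ t₀ = y₂ t₀) (h₀' : y₁' t₀ = y₂' t₀) : EqOn y₁ y₂ (Ioo a b) := by
  let A : ℝ → ℝ × ℝ →L[ℝ] ℝ × ℝ := fun t =>
    (ContinuousLinearMap.inl ℝ ℝ ℝ).comp (ContinuousLinearMap.snd ℝ ℝ ℝ)
      + f t • (ContinuousLinearMap.inr ℝ ℝ ℝ).comp (ContinuousLinearMap.snd ℝ ℝ ℝ)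
      + g t • (ContinuousLinearMap.inr ℝ ℝ ℝ).comp (ContinuousLinearMap.fst ℝ ℝ ℝ)
  have hA : ContinuousOn A (Ioo a b) :=
    (continuousOn_const.add (hf.smul continuousOn_const)).add (hg.smul continuousOn_const)
  have hsystem : ∀ {y y'}, SolvesSecondOrderLinearODE f g (Ioo a b) y y' →
      ∀ t ∈ Ioo a b, HasDerivAt (fun t => (y t, y' t)) (A t (y t, y' t)) t := fun h t ht =>
    ((h t ht).1.prodMk (h t ht).2).congr_deriv (by simp [A])
  intro t ht
  exact congrArg Prod.fst
    (eqOn_of_hasDerivAt_clm_apply hA ht₀ (hsystem h₁) (hsystem h₂) (Prod.ext h₀ h₀') ht)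

theorem existsUnique_eq_linear_combination (hf : ContinuousOn f (Ioo a b))
    (hg : ContinuousOn g (Ioo a b)) (hab : a < b)
    (h₁ : SolvesSecondOrderLinearODE f g (Ioo a b) y₁ y₁')
    (h₂ : SolvesSecondOrderLinearODE f g (Ioo a b) y₂ y₂')
    (hind : ∀ c d : ℝ, (∀ t ∈ Ioo a b, c * y₁ t + d * y₂ t = 0) → c = 0 ∧ d = 0)
    {y y' : ℝ → ℝ} (hy : SolvesSecondOrderLinearODE f g (Ioo a b) y y') :
    ∃! cd : ℝ × ℝ, ∀ t ∈ Ioo a b, y t = cd.1 * y₁ t + cd.2 * y₂ t := by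
  obtain ⟨t₀, ht₀⟩ := nonempty_Ioo.2 hab
  let Φ : ℝ × ℝ →ₗ[ℝ] ℝ × ℝ := (LinearMap.fst ℝ ℝ ℝ).smulRight (y₁ t₀, y₁' t₀)
    + (LinearMap.snd ℝ ℝ ℝ).smulRight (y₂ t₀, y₂' t₀)
  have hΦ : ∀ cd, Φ cd = (cd.1 * y₁ t₀ + cd.2 * y₂ t₀, cd.1 * y₁' t₀ + cd.2 * y₂' t₀) := by
    simp [Φ]
  have hinj : Function.Injective Φ := by
    rw [← LinearMap.ker_eq_bot, LinearMap.ker_eq_bot']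
    intro cd hcd
    rw [hΦ, Prod.mk_eq_zero] at hcd
    have hzero := (h₁.mul_add_mul h₂ cd.1 cd.2).eqOn hf hg (h₁.mul_add_mul h₂ 0 0) ht₀
      (by simp [hcd.1]) (by simp [hcd.2])
    obtain ⟨hc, hd⟩ := hind cd.1 cd.2 fun t ht => by simpa using hzero ht
    exact Prod.ext hc hd
  obtain ⟨cd, hcd⟩ := LinearMap.injective_iff_surjective.1 hinj (y t₀, y' t₀)
  rw [hΦ, Prod.mk.injEq] at hcd
  have hrepr : ∀ t ∈ Ioo a b, y t = cd.1 * y₁ t + cd.2 * y₂ t :=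
    hy.eqOn hf hg (h₁.mul_add_mul h₂ cd.1 cd.2) ht₀ hcd.1.symm hcd.2.symm
  refine ⟨cd, hrepr, fun cd' hcd' => ?_⟩
  obtain ⟨hc, hd⟩ := hind (cd'.1 - cd.1) (cd'.2 - cd.2) fun t ht => by
    linear_combination (hrepr t ht) - hcd' t ht
  exact Prod.ext (sub_eq_zero.1 hc) (sub_eq_zero.1 hd)

end SolvesSecondOrderLinearODE

theorem sum_range_smul_sub_smul_pred_eq_zero {R M : Type*} [Ring R] [AddCommGroup M] [Module R M]
    (n : ℕ) (d e : ℕ → R) (g : ℕ → M) (he : e 0 = 0) (hd : d n = 0)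
    (hde : ∀ l < n, e (l + 1) = d l) :
    ∑ l ∈ Finset.range (n + 1), (d l • g l - e l • g (l - 1)) = 0 := by
  rw [Finset.sum_sub_distrib, Finset.sum_range_succ, Finset.sum_range_succ', hd, he]
  simp only [zero_smul, add_zero, add_tsub_cancel_right]
  exact sub_eq_zero.2 (Finset.sum_congr rfl fun l hl => by rw [hde l (Finset.mem_range.1 hl)])

theorem genBinom_succ_mul (y : ℝ) (k : ℕ) :
    genBinom y (k + 1) * (k + 1) = genBinom y k * (y - k) := by
  have hk : (k.factorial : ℝ) ≠ 0 := by positivity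
  simp only [genBinom, Finset.prod_range_succ, Nat.factorial_succ]
  push_cast
  field_simp

theorem genBinom_succ_mul_genBinom_sub_succ (x y : ℝ) {n l : ℕ} (hl : l < n) :
    genBinom x (l + 1) * genBinom y (n - (l + 1)) * ((l + 1) * (y - n + l + 1))
      = genBinom x l * genBinom y (n - l) * ((x - l) * (n - l)) := by
  have hx := genBinom_succ_mul x l
  have hy := genBinom_succ_mul y (n - (l + 1))
  rw [show n - (l + 1) + 1 = n - l by omega, Nat.cast_sub (by omega : l + 1 ≤ n)] at hy
  push_cast at hy
  linear_combination (y - n + l + 1) * genBinom y (n - (l + 1)) * hx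
    - (x - l) * genBinom x l * hy

theorem genBinom_ne_zero_of_neg {y : ℝ} (hy : y < 0) (k : ℕ) : genBinom y k ≠ 0 :=
  div_ne_zero (Finset.prod_ne_zero_iff.2 fun i _ => by linarith [(Nat.cast_nonneg i : (0:ℝ) ≤ i)])
    (by positivity)

noncomputable def uvPoly (a b : ℕ) : ℝ[X] := (C 2⁻¹ * (X - 1)) ^ a * (C 2⁻¹ * (X + 1)) ^ b

theorem eval_uvPoly (a b : ℕ) (τ : ℝ) :
    (uvPoly a b).eval τ = ((τ - 1) / 2) ^ a * ((τ + 1) / 2) ^ b := by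
  simp [uvPoly, div_eq_inv_mul]

theorem uvPoly_mul_uvPoly (a b a' b' : ℕ) :
    uvPoly a b * uvPoly a' b' = uvPoly (a + a') (b + b') := by
  simp only [uvPoly]
  ring

theorem half_one_sub_X_pow (p : ℕ) : (C 2⁻¹ * (1 - X)) ^ p = (-1 : ℝ) ^ p • uvPoly p 0 := by
  rw [uvPoly, pow_zero, mul_one, ← _root_.smul_pow, neg_one_smul]
  ring

theorem derivative_uvPoly (a b : ℕ) :
    derivative (uvPoly a b) =
      C 2⁻¹ * ((a : ℝ[X]) * uvPoly (a - 1) b + (b : ℝ[X]) * uvPoly a (b - 1)) := by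
  simp only [uvPoly, derivative_mul, derivative_pow, map_natCast, derivative_C, derivative_sub,
    derivative_add, derivative_X, derivative_one, sub_zero, add_zero, zero_mul, zero_add, mul_one]
  ring

noncomputable def jacobiOp (p ℓ : ℕ) : ℝ[X] →ₗ[ℝ] ℝ[X] :=
  LinearMap.mulLeft ℝ (1 - X ^ 2) ∘ₗ derivative ∘ₗ derivative
    + LinearMap.mulLeft ℝ (C (2 * ((p : ℝ) - 1)) * X) ∘ₗ derivative
    + ((ℓ : ℝ) * (ℓ + 1) - p * (p - 1)) • LinearMap.id

theorem eval_jacobiOp (p ℓ : ℕ) (q : ℝ[X]) (τ : ℝ) :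
    (jacobiOp p ℓ q).eval τ = (1 - τ ^ 2) * q.derivative.derivative.eval τ
      + 2 * ((p : ℝ) - 1) * τ * q.derivative.eval τ
      + ((ℓ : ℝ) * (ℓ + 1) - p * (p - 1)) * q.eval τ := by
  simp only [jacobiOp, LinearMap.add_apply, LinearMap.coe_comp, Function.comp_apply,
    LinearMap.mulLeft_apply, LinearMap.smul_apply, LinearMap.id_coe, id_eq, eval_add, eval_mul,
    eval_sub, eval_one, eval_pow, eval_X, eval_C, eval_smul, smul_eq_mul]

theorem jacobiODESol_eval {p ℓ : ℕ} {q : ℝ[X]} (hq : jacobiOp p ℓ q = 0) :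
    JacobiODESol p ℓ (fun τ => q.eval τ) := by
  intro τ _
  have h := congrArg (eval τ) hq
  rw [eval_jacobiOp, eval_zero] at h
  simpa only [funext fun x => Polynomial.deriv (x := x) q, Polynomial.deriv] using h

theorem jacobiOp_uvPoly (p ℓ a b : ℕ) :
    jacobiOp p ℓ (uvPoly a b) = ((a : ℝ) * (p - a)) • uvPoly (a - 1) (b + 1)
      + ((b : ℝ) * (p - b)) • uvPoly (a + 1) (b - 1)
      + ((ℓ : ℝ) * (ℓ + 1) - p * (p - 1) + (p - 1) * (a + b) - 2 * a * b) • uvPoly a b := by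
  refine Polynomial.funext fun τ => ?_
  simp only [eval_jacobiOp, derivative_uvPoly, derivative_mul, derivative_C, derivative_add,
    derivative_natCast, eval_add, eval_mul, eval_C, eval_natCast, eval_smul, eval_uvPoly,
    smul_eq_mul, zero_mul, zero_add]
  -- the exponents `a - 1`, `a - 2`, `b - 1`, `b - 2` truncate for `a, b ≤ 1`, where their
  -- coefficients vanish
  rcases a with _ | _ | a <;> rcases b with _ | _ | b <;>
    simp only [Nat.cast_add, Nat.cast_one, Nat.cast_zero, add_tsub_cancel_right, tsub_self,
      zero_tsub] <;> ring

theorem jacobiOp_uvPoly_add_tsub (p ℓ l : ℕ) (hl : l ≤ ℓ) :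
    jacobiOp p ℓ (uvPoly (p + (ℓ - l)) l) =
      (((p : ℝ) + ℓ - l) * (l - ℓ)) • (uvPoly (p + (ℓ - (l + 1))) (l + 1) - uvPoly (p + (ℓ - l)) l)
      - ((l : ℝ) * (p - l)) • (uvPoly (p + (ℓ - l)) l - uvPoly (p + (ℓ - (l - 1))) (l - 1)) := by
  have hcast : ((p + (ℓ - l) : ℕ) : ℝ) = p + ℓ - l := by push_cast [Nat.cast_sub hl]; ring
  have hup : (((p + (ℓ - l) : ℕ) : ℝ) * (p - (p + (ℓ - l) : ℕ))) • uvPoly (p + (ℓ - l) - 1) (l + 1)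
      = (((p : ℝ) + ℓ - l) * (l - ℓ)) • uvPoly (p + (ℓ - (l + 1))) (l + 1) := by
    rcases hl.eq_or_lt with rfl | hlt
    · simp
    · rw [hcast, show p + (ℓ - l) - 1 = p + (ℓ - (l + 1)) by omega]
      ring_nf
  have hdown : ((l : ℝ) * (p - l)) • uvPoly (p + (ℓ - l) + 1) (l - 1)
      = ((l : ℝ) * (p - l)) • uvPoly (p + (ℓ - (l - 1))) (l - 1) := by
    rcases l with _ | l
    · simp
    · rw [show p + (ℓ - (l + 1)) + 1 = p + (ℓ - (l + 1 - 1)) by omega]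
  rw [jacobiOp_uvPoly, hup, hdown, hcast]
  module

noncomputable def jacobiPoly (n : ℕ) (α β : ℝ) : ℝ[X] :=
  ∑ l ∈ Finset.range (n + 1),
    (genBinom ((n : ℝ) + α) l * genBinom ((n : ℝ) + β) (n - l)) • uvPoly (n - l) l

theorem eval_jacobiPoly (n : ℕ) (α β τ : ℝ) : (jacobiPoly n α β).eval τ = jacobiP n α β τ := by
  simp only [jacobiPoly, jacobiP, eval_finsetSum, eval_smul, eval_uvPoly, smul_eq_mul, mul_assoc]

theorem jacobiOp_uvPoly_mul_jacobiPoly (p ℓ : ℕ) :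
    jacobiOp p ℓ (uvPoly p 0 * jacobiPoly ℓ p (-p)) = 0 := by
  set c : ℕ → ℝ := fun l => genBinom ((ℓ : ℝ) + p) l * genBinom ((ℓ : ℝ) + -p) (ℓ - l)
  set f : ℕ → ℝ[X] := fun l => uvPoly (p + (ℓ - l)) l
  have hexpand : uvPoly p 0 * jacobiPoly ℓ p (-p) = ∑ l ∈ Finset.range (ℓ + 1), c l • f l := by
    simp only [jacobiPoly, Finset.mul_sum, mul_smul_comm, uvPoly_mul_uvPoly, zero_add, c, f]
  have hterm : ∀ l ∈ Finset.range (ℓ + 1), c l • jacobiOp p ℓ (f l) =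
      (c l * (((p : ℝ) + ℓ - l) * (l - ℓ))) • (f (l + 1) - f l)
        - (c l * ((l : ℝ) * (p - l))) • (f (l - 1 + 1) - f (l - 1)) := by
    intro l hl
    rw [jacobiOp_uvPoly_add_tsub p ℓ l (Nat.lt_succ_iff.1 (Finset.mem_range.1 hl)), smul_sub,
      smul_smul, smul_smul]
    rcases l with _ | l
    · simp [f]
    · rfl
  rw [hexpand, map_sum]
  simp only [map_smul]
  rw [Finset.sum_congr rfl hterm]
  refine sum_range_smul_sub_smul_pred_eq_zero ℓ _ _ (fun l => f (l + 1) - f l) (by simp) (by simp)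
    fun l hl => ?_
  have hrec := genBinom_succ_mul_genBinom_sub_succ ((ℓ : ℝ) + p) ((ℓ : ℝ) + -p) hl
  push_cast
  linear_combination -hrec

noncomputable def jacobiSolPoly (p ℓ : ℕ) : ℝ[X] := (C 2⁻¹ * (1 - X)) ^ p * jacobiPoly ℓ p (-p)

theorem eval_jacobiSolPoly (p ℓ : ℕ) (τ : ℝ) :
    (jacobiSolPoly p ℓ).eval τ = ((1 - τ) / 2) ^ p * jacobiP ℓ p (-p) τ := by
  simp [jacobiSolPoly, eval_jacobiPoly, div_eq_inv_mul]

theorem jacobiOp_jacobiSolPoly (p ℓ : ℕ) : jacobiOp p ℓ (jacobiSolPoly p ℓ) = 0 := by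
  rw [jacobiSolPoly, half_one_sub_X_pow, smul_mul_assoc, map_smul,
    jacobiOp_uvPoly_mul_jacobiPoly, smul_zero]

theorem jacobiP_neg (n : ℕ) (α β x : ℝ) : jacobiP n α β (-x) = (-1) ^ n * jacobiP n β α x := by
  rw [jacobiP, jacobiP, ← Finset.sum_range_reflect, Finset.mul_sum]
  refine Finset.sum_congr rfl fun l hl => ?_
  have hl' : l ≤ n := Nat.lt_succ_iff.1 (Finset.mem_range.1 hl)
  rw [show n + 1 - 1 - l = n - l by omega, show n - (n - l) = l by omega,
    show (-x - 1) / 2 = -((x + 1) / 2) by ring, show (-x + 1) / 2 = -((x - 1) / 2) by ring,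
    neg_pow ((x + 1) / 2), neg_pow ((x - 1) / 2)]
  have hsign : (-1 : ℝ) ^ l * (-1) ^ (n - l) = (-1) ^ n := by rw [← pow_add, Nat.add_sub_cancel' hl']
  linear_combination genBinom (n + α) (n - l) * genBinom (n + β) l * ((x + 1) / 2) ^ l
    * ((x - 1) / 2) ^ (n - l) * hsign

theorem one_add_div_two_pow_mul_jacobiP (p ℓ : ℕ) (α β τ : ℝ) :
    ((1 + τ) / 2) ^ p * jacobiP ℓ α β τ = (-1) ^ ℓ * (((1 - -τ) / 2) ^ p * jacobiP ℓ β α (-τ)) := by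
  have hsq : (-1 : ℝ) ^ ℓ * (-1) ^ ℓ = 1 := by rw [← mul_pow]; norm_num
  rw [jacobiP_neg, sub_neg_eq_add]
  linear_combination -((1 + τ) / 2) ^ p * jacobiP ℓ α β τ * hsq

theorem jacobiP_one (n : ℕ) (α β : ℝ) : jacobiP n α β 1 = genBinom (n + α) n := by
  rw [jacobiP, Finset.sum_eq_single_of_mem n (Finset.self_mem_range_succ n)]
  · simp [genBinom]
  · intro l hl hne
    have : n - l ≠ 0 := by have := Finset.mem_range.1 hl; omega
    simp [this]

theorem JacobiODESol.const_mul_comp_neg {p ℓ : ℕ} {y : ℝ → ℝ} (hy : JacobiODESol p ℓ y) (c : ℝ) :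
    JacobiODESol p ℓ (fun τ => c * y (-τ)) := by
  intro τ hτ
  have h₁ : deriv (fun τ => c * y (-τ)) = fun τ => -(c * deriv y (-τ)) := funext fun τ => by
    rw [deriv_const_mul_field, deriv_comp_neg, mul_neg]
  have h₂ : deriv (fun τ => -(c * deriv y (-τ))) τ = c * deriv (deriv y) (-τ) := by
    rw [deriv.fun_neg, deriv_const_mul_field, deriv_comp_neg, mul_neg, neg_neg]
  rw [h₁, h₂]
  linear_combination c * hy (-τ) ⟨by linarith [hτ.2], by linarith [hτ.1]⟩

theorem JacobiODESol.solvesSecondOrderLinearODE {p ℓ : ℕ} {y : ℝ → ℝ} (hy : JacobiODESol p ℓ y)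
    (hd : ∀ τ ∈ Ioo (-1 : ℝ) 1, DifferentiableAt ℝ y τ)
    (hd' : ∀ τ ∈ Ioo (-1 : ℝ) 1, DifferentiableAt ℝ (deriv y) τ) :
    SolvesSecondOrderLinearODE (fun τ => 2 * ((p : ℝ) - 1) * τ / (τ ^ 2 - 1))
      (fun τ => ((ℓ : ℝ) * (ℓ + 1) - p * (p - 1)) / (τ ^ 2 - 1)) (Ioo (-1) 1) y (deriv y) := by
  intro τ hτ
  have hne : τ ^ 2 - 1 ≠ 0 := by nlinarith [hτ.1, hτ.2]
  refine ⟨(hd τ hτ).hasDerivAt, (hd' τ hτ).hasDerivAt.congr_deriv ?_⟩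
  field_simp
  linear_combination -hy τ hτ

theorem differentiable_deriv_eval (q : ℝ[X]) : Differentiable ℝ (deriv fun x => q.eval x) := by
  simpa only [← funext fun x => Polynomial.deriv (x := x) q] using q.derivative.differentiable

theorem JacobiODESol.solvesSecondOrderLinearODE_of_eq_eval {p ℓ : ℕ} {y : ℝ → ℝ} {q : ℝ[X]}
    (hy : JacobiODESol p ℓ y) (hq : ∀ τ, y τ = q.eval τ) :
    SolvesSecondOrderLinearODE (fun τ => 2 * ((p : ℝ) - 1) * τ / (τ ^ 2 - 1))
      (fun τ => ((ℓ : ℝ) * (ℓ + 1) - p * (p - 1)) / (τ ^ 2 - 1)) (Ioo (-1) 1) y (deriv y) := by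
  obtain rfl : y = fun τ => q.eval τ := funext hq
  exact hy.solvesSecondOrderLinearODE (fun τ _ => q.differentiableAt)
    (fun τ _ => (differentiable_deriv_eval q).differentiableAt)

theorem continuousOn_div_sq_sub_one {f : ℝ → ℝ} (hf : Continuous f) :
    ContinuousOn (fun τ => f τ / (τ ^ 2 - 1)) (Ioo (-1) 1) :=
  hf.continuousOn.div (by fun_prop) fun τ hτ => by nlinarith [hτ.1, hτ.2]

theorem eq_zero_and_eq_zero_of_mul_add_mul_eqOn_Ioo {y₁ y₂ : ℝ → ℝ} {a b c d : ℝ} (hab : a < b)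
    (h₁ : Continuous y₁) (h₂ : Continuous y₂) (h₁a : y₁ a ≠ 0) (h₁b : y₁ b = 0)
    (h₂a : y₂ a = 0) (h₂b : y₂ b ≠ 0) (h : ∀ t ∈ Ioo a b, c * y₁ t + d * y₂ t = 0) :
    c = 0 ∧ d = 0 := by
  have hcl : EqOn (fun t => c * y₁ t + d * y₂ t) 0 (Icc a b) := by
    rw [← closure_Ioo hab.ne]
    exact EqOn.closure h (by fun_prop) continuous_const
  have ha := hcl (left_mem_Icc.2 hab.le)
  have hb := hcl (right_mem_Icc.2 hab.le)
  simp only [h₁b, h₂a, Pi.zero_apply, mul_zero, add_zero, zero_add] at ha hb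
  exact ⟨(mul_eq_zero.1 ha).resolve_right h₁a, (mul_eq_zero.1 hb).resolve_right h₂b⟩

/-- For `0 ≤ ℓ < p`, the functions `Q₁(τ) = ((1−τ)/2)^p P_ℓ^{(p,−p)}(τ)` and
`Q₃(τ) = ((1+τ)/2)^p P_ℓ^{(−p,p)}(τ)` are polynomial, solve the Jacobi-type ODE with
parameters `(p, ℓ)` on `(−1,1)`, are linearly independent, and every solution of this ODE
is a unique linear combination of them. -/
theorem stmt7 (p ℓ : ℕ) (h : ℓ < p) :
    let Q₁ : ℝ → ℝ := fun τ => ((1 - τ) / 2) ^ p * jacobiP ℓ (p : ℝ) (-(p : ℝ)) τ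
    let Q₃ : ℝ → ℝ := fun τ => ((1 + τ) / 2) ^ p * jacobiP ℓ (-(p : ℝ)) (p : ℝ) τ
    (∃ q : Polynomial ℝ, ∀ τ : ℝ, Q₁ τ = q.eval τ) ∧
    (∃ q : Polynomial ℝ, ∀ τ : ℝ, Q₃ τ = q.eval τ) ∧
    JacobiODESol p ℓ Q₁ ∧ JacobiODESol p ℓ Q₃ ∧
    (∀ c d : ℝ, (∀ τ ∈ Set.Ioo (-1 : ℝ) 1, c * Q₁ τ + d * Q₃ τ = 0) → c = 0 ∧ d = 0) ∧
    (∀ a : ℝ → ℝ,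
      (∀ τ ∈ Set.Ioo (-1 : ℝ) 1, DifferentiableAt ℝ a τ) →
      (∀ τ ∈ Set.Ioo (-1 : ℝ) 1, DifferentiableAt ℝ (deriv a) τ) →
      JacobiODESol p ℓ a →
      ∃! cd : ℝ × ℝ, ∀ τ ∈ Set.Ioo (-1 : ℝ) 1, a τ = cd.1 * Q₁ τ + cd.2 * Q₃ τ) := by
  intro Q₁ Q₃
  have hQ₁ : ∀ τ, Q₁ τ = (jacobiSolPoly p ℓ).eval τ := fun τ => (eval_jacobiSolPoly p ℓ τ).symm
  have hQ₃ : ∀ τ, Q₃ τ = (-1) ^ ℓ * Q₁ (-τ) := fun τ => one_add_div_two_pow_mul_jacobiP _ _ _ _ τ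
  have hQ₃' : ∀ τ, Q₃ τ = (C ((-1) ^ ℓ) * (jacobiSolPoly p ℓ).comp (-X)).eval τ := fun τ => by
    simp [hQ₃, hQ₁]
  have sol₁ : JacobiODESol p ℓ Q₁ := funext hQ₁ ▸ jacobiODESol_eval (jacobiOp_jacobiSolPoly p ℓ)
  have sol₃ : JacobiODESol p ℓ Q₃ := funext hQ₃ ▸ sol₁.const_mul_comp_neg _
  have hp : p ≠ 0 := by omega
  have hQ₃one : Q₃ 1 ≠ 0 := by
    simpa [Q₃, jacobiP_one] using genBinom_ne_zero_of_neg (by simpa using h) ℓ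
  have hind : ∀ c d : ℝ, (∀ τ ∈ Ioo (-1 : ℝ) 1, c * Q₁ τ + d * Q₃ τ = 0) → c = 0 ∧ d = 0 :=
    fun c d => eq_zero_and_eq_zero_of_mul_add_mul_eqOn_Ioo (by norm_num)
      ((Polynomial.continuous _).congr fun τ => (hQ₁ τ).symm)
      ((Polynomial.continuous _).congr fun τ => (hQ₃' τ).symm)
      (by simpa [hQ₃] using hQ₃one) (by simp [Q₁, hp]) (by simp [Q₃, hp]) hQ₃one
  refine ⟨⟨_, hQ₁⟩, ⟨_, hQ₃'⟩, sol₁, sol₃, hind, fun a ha ha' sol => ?_⟩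
  exact SolvesSecondOrderLinearODE.existsUnique_eq_linear_combination
    (continuousOn_div_sq_sub_one (by fun_prop)) (continuousOn_div_sq_sub_one continuous_const)
    (by norm_num) (sol₁.solvesSecondOrderLinearODE_of_eq_eval hQ₁)
    (sol₃.solvesSecondOrderLinearODE_of_eq_eval hQ₃') hind (sol.solvesSecondOrderLinearODE ha ha')
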